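/- arXiv:1511.06905 — 4 statements merged into one kernel-verified Lean document; each statement's English description precedes it below -/
import Mathlib

section
/- With the setup of the edge replacement problem: for every crossing edge (x, y) in C(e_i) (i.e., x ∈ T_1(e_i), y ∈ T_2(e_i), (x,y) ≠ e_i), the distance from y to t in G \ {e_i} equals the distance from y to t in G. -/
/-! A walk from `y` to `t` that uses the edge `e = (v_{i-1}, v_i)` passes through `b = v_i`.
Because `T_s` is a shortest-path tree and `e` is a bridge of it, the tree path from `b` to `y`
avoids `e` and is a shortest `b`-`y` path of `G`; because `P_G(s,t)` is a shortest path, its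
suffix from `b` to `t` avoids `e` and is a shortest `b`-`t` path of `G`. Their concatenation
avoids `e` and is no longer than the walk we started from. -/

open Classical SimpleGraph

noncomputable section

variable {V : Type*}

/-- Total weight of a walk, summing `w` over its darts. -/
def walkWeight (G : SimpleGraph V) (w : V → V → ℝ) {u v : V} (p : G.Walk u v) : ℝ :=
  (p.darts.map fun d => w d.fst d.snd).sum

/-- Weighted shortest-path distance: infimum of walk weights. -/
def wdist (G : SimpleGraph V) (w : V → V → ℝ) (u v : V) : ℝ :=
  sInf {r | ∃ p : G.Walk u v, walkWeight G w p = r}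

/-- The graph obtained by deleting a set of vertices (kept on the same vertex type). -/
def delVerts (G : SimpleGraph V) (S : Set V) : SimpleGraph V where
  Adj a b := G.Adj a b ∧ a ∉ S ∧ b ∉ S
  symm := ⟨fun a b h => ⟨h.1.symm, h.2.2, h.2.1⟩⟩
  loopless := ⟨fun a h => G.loopless.irrefl a h.1⟩

/-- `u` is in the subtree of `T` rooted at the `k`-th vertex of the path `vp`. -/
def inSub (T : SimpleGraph V) (vp : ℕ → V) (k : ℕ) (u : V) : Prop :=
  k = 0 ∨ (T.deleteEdges {s(vp (k-1), vp k)}).Reachable (vp k) u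

/-- The label of a vertex: the largest `k ≤ l` with `u` in the subtree rooted at `vp k`. -/
def label (T : SimpleGraph V) (vp : ℕ → V) (l : ℕ) (u : V) : ℕ :=
  sSup {k | k ≤ l ∧ inSub T vp k u}

section WalkWeight

variable {G H : SimpleGraph V} {w : V → V → ℝ} {u v z : V}

@[simp]
lemma walkWeight_nil : walkWeight G w (Walk.nil : G.Walk u u) = 0 := by
  simp [walkWeight]

@[simp]
lemma walkWeight_cons (h : G.Adj u v) (q : G.Walk v z) :
    walkWeight G w (Walk.cons h q) = w u v + walkWeight G w q := by
  simp [walkWeight]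

@[simp]
lemma walkWeight_append (p : G.Walk u v) (q : G.Walk v z) :
    walkWeight G w (p.append q) = walkWeight G w p + walkWeight G w q := by
  simp [walkWeight, Walk.darts_append]

@[simp]
lemma walkWeight_concat (p : G.Walk u v) (h : G.Adj v z) :
    walkWeight G w (p.concat h) = walkWeight G w p + w v z := by
  simp [Walk.concat_eq_append]

lemma walkWeight_reverse (hws : ∀ a b, w a b = w b a) (p : G.Walk u v) :
    walkWeight G w p.reverse = walkWeight G w p := by
  induction p with
  | nil => simp
  | cons h q ih => simp [ih, hws, add_comm]

@[simp]
lemma walkWeight_transfer (p : G.Walk u v) (hp : ∀ e ∈ p.edges, e ∈ H.edgeSet) :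
    walkWeight H w (p.transfer H hp) = walkWeight G w p := by
  induction p with
  | nil => simp
  | cons h q ih =>
    rw [walkWeight_cons, ← ih (fun e he => hp e (List.mem_cons_of_mem _ he))]
    exact walkWeight_cons (H.mem_edgeSet.mp (hp _ List.mem_cons_self)) _

@[simp]
lemma walkWeight_mapLe (hGH : G ≤ H) (p : G.Walk u v) :
    walkWeight H w (p.mapLe hGH) = walkWeight G w p := by
  rw [Walk.mapLe, ← Walk.transfer_eq_map_ofLE _
    (fun _ he => edgeSet_mono hGH (p.edges_subset_edgeSet he)), walkWeight_transfer]

lemma walkWeight_nonneg (hw : ∀ a b, G.Adj a b → 0 ≤ w a b) (p : G.Walk u v) :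
    0 ≤ walkWeight G w p := by
  induction p with
  | nil => simp
  | cons h q ih => simpa using add_nonneg (hw _ _ h) ih

lemma walkWeight_bypass_le (hw : ∀ a b, G.Adj a b → 0 ≤ w a b) (p : G.Walk u v) :
    walkWeight G w p.bypass ≤ walkWeight G w p :=
  (p.darts_bypass_sublist_darts.map _).sum_le_sum <| by
    simpa using fun d _ => hw _ _ d.adj

lemma wdist_le_walkWeight (hw : ∀ a b, G.Adj a b → 0 ≤ w a b) (q : G.Walk u v) :
    wdist G w u v ≤ walkWeight G w q :=
  csInf_le ⟨0, fun _ ⟨p, hp⟩ => hp ▸ walkWeight_nonneg hw p⟩ ⟨q, rfl⟩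

lemma wdist_le_wdist_of_forall_exists_le [Nonempty (G.Walk u v)]
    (hw : ∀ a b, H.Adj a b → 0 ≤ w a b)
    (h : ∀ q : G.Walk u v, ∃ q' : H.Walk u v, walkWeight H w q' ≤ walkWeight G w q) :
    wdist H w u v ≤ wdist G w u v := by
  obtain ⟨q₀⟩ := ‹Nonempty (G.Walk u v)›
  refine le_csInf ⟨_, q₀, rfl⟩ ?_
  rintro _ ⟨q, rfl⟩
  obtain ⟨q', hq'⟩ := h q
  exact (wdist_le_walkWeight hw q').trans hq'

lemma walkWeight_le_of_add_eq_wdist (hw : ∀ a b, G.Adj a b → 0 ≤ w a b)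
    (p : G.Walk u v) (q : G.Walk v z) (hpq : walkWeight G w p + walkWeight G w q = wdist G w u z)
    (q' : G.Walk v z) : walkWeight G w q ≤ walkWeight G w q' := by
  have := wdist_le_walkWeight hw (p.append q')
  simp only [walkWeight_append] at this
  linarith

lemma SimpleGraph.IsAcyclic.walkWeight_eq_wdist (hG : G.IsAcyclic)
    (hw : ∀ a b, G.Adj a b → 0 ≤ w a b) {p : G.Walk u v} (hp : p.IsPath) :
    walkWeight G w p = wdist G w u v := by
  refine le_antisymm (le_csInf ⟨_, p, rfl⟩ ?_) (wdist_le_walkWeight hw p)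
  rintro _ ⟨q, rfl⟩
  have hpq : p = q.bypass :=
    congrArg Subtype.val ((hG.subsingleton_path u v).elim ⟨p, hp⟩ ⟨_, q.bypass_isPath⟩)
  exact hpq ▸ walkWeight_bypass_le hw q

end WalkWeight

namespace SimpleGraph.Walk

variable {G : SimpleGraph V} {u v : V}

lemma edges_eq_take_append_cons_drop (p : G.Walk u v) {k : ℕ} (hk : k < p.length) :
    p.edges =
      (p.take k).edges ++ s(p.getVert k, p.getVert (k + 1)) :: (p.drop (k + 1)).edges := by
  rw [edges_take, edges_drop, ← getElem_edges (by simpa using hk), List.getElem_cons_drop,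
    List.take_append_drop]

lemma IsPath.mk_getVert_notMem_edges_take {p : G.Walk u v} (hp : p.IsPath) {k : ℕ}
    (hk : k < p.length) : s(p.getVert k, p.getVert (k + 1)) ∉ (p.take k).edges := fun he =>
  (List.nodup_append.mp (p.edges_eq_take_append_cons_drop hk ▸ hp.edges_nodup)).2.2 _ he _
    List.mem_cons_self rfl

lemma IsPath.mk_getVert_notMem_edges_drop {p : G.Walk u v} (hp : p.IsPath) {k : ℕ}
    (hk : k < p.length) : s(p.getVert k, p.getVert (k + 1)) ∉ (p.drop (k + 1)).edges :=
  (List.nodup_cons.mp (List.nodup_append.mp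
    (p.edges_eq_take_append_cons_drop hk ▸ hp.edges_nodup)).2.1).1

lemma isPath_mapLe_append_cons_of_isBridge {a b : V} (hab : G.Adj a b)
    (hbr : G.IsBridge s(a, b)) {A : (G.deleteEdges {s(a, b)}).Walk u a}
    {R : (G.deleteEdges {s(a, b)}).Walk b v} (hA : A.IsPath) (hR : R.IsPath) :
    ((A.mapLe (G.deleteEdges_le _)).append (cons hab (R.mapLe (G.deleteEdges_le _)))).IsPath := by
  rw [isPath_def, support_append, support_cons, List.tail_cons, support_mapLe_eq_support,
    support_mapLe_eq_support]
  refine hA.support_nodup.append hR.support_nodup fun x hxA hxR => hbr ?_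
  exact (A.dropUntil x hxA).reachable.symm.trans (R.takeUntil x hxR).reachable.symm

end SimpleGraph.Walk

section ShortestPathTree

variable {G T : SimpleGraph V} {w : V → V → ℝ}

/-- `R` is a suffix of the tree path `s ⋯ a b ⋯ y`, which is a shortest path of `G` by `hsy`. -/
lemma SimpleGraph.IsAcyclic.walkWeight_le_of_wdist_eq (hT : T.IsAcyclic) (hTG : T ≤ G)
    (hw : ∀ a b, G.Adj a b → 0 ≤ w a b) {s a b y : V} (hab : T.Adj a b)
    (hsa : (T.deleteEdges {s(a, b)}).Reachable s a) {R : (T.deleteEdges {s(a, b)}).Walk b y}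
    (hR : R.IsPath) (hsy : wdist T w s y = wdist G w s y) (q : G.Walk b y) :
    walkWeight _ w R ≤ walkWeight G w q := by
  let A := hsa.some.bypass
  have hT'G : T.deleteEdges {s(a, b)} ≤ G := (deleteEdges_le _).trans hTG
  have hpath := Walk.isPath_mapLe_append_cons_of_isBridge hab
    (isAcyclic_iff_forall_adj_isBridge.mp hT hab) (Walk.bypass_isPath hsa.some) hR
  have hsy' : walkWeight _ w A + w a b + walkWeight _ w R = wdist G w s y := by
    rw [← hsy, ← hT.walkWeight_eq_wdist (fun a b h => hw a b (hTG h)) hpath]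
    simp [A, add_assoc]
  simpa using walkWeight_le_of_add_eq_wdist hw ((A.mapLe hT'G).concat (hTG hab))
    (R.mapLe hT'G) (by simpa using hsy') q

/-- A walk through the deleted edge passes `b`, so it is no shorter than `R.append S`. -/
lemma wdist_deleteEdges_eq_of_forall_walkWeight_le (hw : ∀ a b, G.Adj a b → 0 ≤ w a b)
    {a b y t : V} (R : (G.deleteEdges {s(a, b)}).Walk y b)
    (S : (G.deleteEdges {s(a, b)}).Walk b t)
    (hR : ∀ q : G.Walk y b, walkWeight _ w R ≤ walkWeight G w q)
    (hS : ∀ q : G.Walk b t, walkWeight _ w S ≤ walkWeight G w q) :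
    wdist (G.deleteEdges {s(a, b)}) w y t = wdist G w y t := by
  have hRS : ∀ q : G.Walk y t, s(a, b) ∈ q.edges →
      walkWeight _ w (R.append S) ≤ walkWeight G w q := by
    intro q hq
    have hb := q.snd_mem_support_of_mem_edges hq
    calc walkWeight _ w (R.append S)
        = walkWeight _ w R + walkWeight _ w S := walkWeight_append _ _
      _ ≤ walkWeight G w (q.takeUntil b hb) + walkWeight G w (q.dropUntil b hb) :=
          add_le_add (hR _) (hS _)
      _ = walkWeight G w q := by rw [← walkWeight_append, q.take_spec]
  have : Nonempty ((G.deleteEdges {s(a, b)}).Walk y t) := ⟨R.append S⟩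
  have : Nonempty (G.Walk y t) := ⟨(R.append S).mapLe (deleteEdges_le _)⟩
  refine le_antisymm (wdist_le_wdist_of_forall_exists_le (fun a b h => hw a b h.1) fun q => ?_)
    (wdist_le_wdist_of_forall_exists_le hw fun q => ⟨q.mapLe (deleteEdges_le _), by simp⟩)
  by_cases hq : s(a, b) ∈ q.edges
  · exact ⟨R.append S, hRS q hq⟩
  · exact ⟨q.toDeleteEdge _ hq, by simp⟩

end ShortestPathTree

theorem stmt1_general {V : Type*}
    (G : SimpleGraph V) (w : V → V → ℝ)
    (hw : ∀ a b, G.Adj a b → 0 < w a b) (hws : ∀ a b, w a b = w b a)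
    (s t : V) (p : G.Walk s t) (hp : p.IsPath)
    (hps : walkWeight G w p = wdist G w s t)
    (T : SimpleGraph V) (hTG : T ≤ G) (hT : T.IsTree)
    (hSPT : ∀ v, wdist T w s v = wdist G w s v)
    (hPT : ∀ e ∈ p.edges, e ∈ T.edgeSet)
    (i : ℕ) (hi1 : 1 ≤ i) (hil : i ≤ p.length)
    (y : V)
    (hy : (T.deleteEdges {s(p.getVert (i-1), p.getVert i)}).Reachable (p.getVert i) y) :
    wdist (G.deleteEdges {s(p.getVert (i-1), p.getVert i)}) w y t = wdist G w y t := by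
  obtain ⟨k, rfl⟩ : ∃ k, i = k + 1 := ⟨i - 1, by omega⟩
  rw [Nat.add_sub_cancel] at hy ⊢
  have hk : k < p.length := by omega
  have hw0 : ∀ a b, G.Adj a b → 0 ≤ w a b := fun a b h => (hw a b h).le
  have hab := hPT _ (p.mk_mem_edges_iff_exists.mpr ⟨k, hk, rfl⟩)
  have hsa : (T.deleteEdges {s(p.getVert k, p.getVert (k + 1))}).Reachable s (p.getVert k) :=
    ⟨(p.take k).transfer _ fun e he => by
      rw [edgeSet_deleteEdges]
      exact ⟨hPT e (List.mem_of_mem_take (p.edges_take k ▸ he)),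
        fun h => hp.mk_getVert_notMem_edges_take hk (h ▸ he)⟩⟩
  refine wdist_deleteEdges_eq_of_forall_walkWeight_le hw0
    (hy.some.bypass.reverse.mapLe (deleteEdges_mono hTG))
    ((p.drop (k + 1)).toDeleteEdge _ (hp.mk_getVert_notMem_edges_drop hk))
    (fun q => ?_) fun q => ?_
  · simpa [walkWeight_reverse hws] using hT.isAcyclic.walkWeight_le_of_wdist_eq hTG hw0 hab hsa
      (Walk.bypass_isPath _) (hSPT y) q.reverse
  · simpa using walkWeight_le_of_add_eq_wdist hw0 (p.take (k + 1)) _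
      (by rw [← walkWeight_append, p.append_take_drop_eq, hps]) q

theorem stmt1 {V : Type*}
    (G : SimpleGraph V) (hconn : G.Connected) (w : V → V → ℝ)
    (hw : ∀ a b, G.Adj a b → 0 < w a b) (hws : ∀ a b, w a b = w b a)
    (s t : V) (p : G.Walk s t) (hp : p.IsPath)
    (hps : walkWeight G w p = wdist G w s t)
    (T : SimpleGraph V) (hTG : T ≤ G) (hT : T.IsTree)
    (hSPT : ∀ v, wdist T w s v = wdist G w s v)
    (hPT : ∀ e ∈ p.edges, e ∈ T.edgeSet)
    (i : ℕ) (hi1 : 1 ≤ i) (hil : i ≤ p.length)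
    (x y : V) (hxy : G.Adj x y) (hne : s(x, y) ≠ s(p.getVert (i-1), p.getVert i))
    (hx : (T.deleteEdges {s(p.getVert (i-1), p.getVert i)}).Reachable s x)
    (hy : (T.deleteEdges {s(p.getVert (i-1), p.getVert i)}).Reachable (p.getVert i) y) :
    wdist (G.deleteEdges {s(p.getVert (i-1), p.getVert i)}) w y t = wdist G w y t :=
  stmt1_general G w hw hws s t p hp hps T hTG hT hSPT hPT i hi1 hil y hy
end
end

section
/- The replacement path distance satisfies d_{G \ e_i}(s, t) = min over (x', y') ∈ C(e_i) of (d_G(s, x') + w(x', y') + d_G(y', t)), provided C(e_i) is nonempty. -/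
/-!
Deleting the tree edge `e = uv` splits `T` into the side `A` of `s` and the side `B` of `v`,
which contains `t`. A walk of `G \ e` from `s` to `t` leaves `A` through some edge `xy ≠ e`,
so it weighs at least `d(s,x) + w(x,y) + d(y,t)`. Conversely, the tree path from `s` to `x`
avoids `e` and has weight `d(s,x)`, and a walk from `y ∈ B` to `t` through `e` can be replaced by
the tree route `y → v → t` inside `B`: since `T` is a shortest path tree its weight is
`d(s,y) + d(s,t) - 2 d(s,v)`, which the triangle inequality at `u` bounds by the weight of the
walk, as `d(s,u) ≤ d(s,v)`.
-/

open Classical SimpleGraph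

noncomputable section

variable {V : Type*}

namespace SimpleGraph

namespace Walk

variable {G : SimpleGraph V} {a b : V}

theorem exists_eq_append_cons_of_mem_darts {p : G.Walk a b} {d : G.Dart} (hd : d ∈ p.darts) :
    ∃ (p₁ : G.Walk a d.fst) (p₂ : G.Walk d.snd b), p = p₁.append (cons d.adj p₂) := by
  induction p with
  | nil => simp at hd
  | cons h p ih =>
    rcases List.mem_cons.1 hd with rfl | hd
    · exact ⟨nil, p, rfl⟩
    · obtain ⟨p₁, p₂, rfl⟩ := ih hd
      exact ⟨cons h p₁, p₂, rfl⟩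

theorem reachable_deleteEdges_or_exists_mem (p : G.Walk a b) (e : Sym2 V) :
    (G.deleteEdges {e}).Reachable a b ∨ ∃ x ∈ e, (G.deleteEdges {e}).Reachable x b := by
  induction p with
  | nil => exact Or.inl .rfl
  | @cons a c b h p ih =>
    by_cases hac : s(a, c) = e
    · exact Or.inr (ih.elim (fun hcb => ⟨c, hac ▸ Sym2.mem_mk_right a c, hcb⟩) id)
    · have hadj : (G.deleteEdges {e}).Adj a c := by simpa [hac] using h
      exact ih.imp_left hadj.reachable.trans

theorem IsTrail.reachable_deleteEdges_of_mem_darts {T : SimpleGraph V} {p : G.Walk a b}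
    (hp : p.IsTrail) (hpT : ∀ e ∈ p.edges, e ∈ T.edgeSet) {d : G.Dart} (hd : d ∈ p.darts) :
    T.Adj d.fst d.snd ∧ (T.deleteEdges {s(d.fst, d.snd)}).Reachable a d.fst ∧
      (T.deleteEdges {s(d.fst, d.snd)}).Reachable d.snd b := by
  obtain ⟨p₁, p₂, rfl⟩ := exists_eq_append_cons_of_mem_darts hd
  have hnd := hp.edges_nodup
  simp only [edges_append, edges_cons, List.nodup_middle, List.nodup_cons, List.mem_append,
    not_or] at hnd
  refine ⟨T.mem_edgeSet.1 (hpT _ (by simp)), ?_, ?_⟩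
  · exact reachable_deleteEdges_iff_exists_walk.2
      ⟨p₁.transfer T fun e he => hpT e (by simp [he]), by simpa using hnd.1.1⟩
  · exact reachable_deleteEdges_iff_exists_walk.2
      ⟨p₂.transfer T fun e he => hpT e (by simp [he]), by simpa using hnd.1.2⟩

end Walk

open Walk

section WalkWeight

variable {G H : SimpleGraph V} {w : V → V → ℝ} {a b c : V}

@[simp]
lemma walkWeight_nil : walkWeight G w (nil : G.Walk a a) = 0 := by
  simp [walkWeight]

@[simp]
lemma walkWeight_cons (h : G.Adj a b) (p : G.Walk b c) :
    walkWeight G w (cons h p) = w a b + walkWeight G w p := by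
  simp [walkWeight]

@[simp]
lemma walkWeight_append (p : G.Walk a b) (q : G.Walk b c) :
    walkWeight G w (p.append q) = walkWeight G w p + walkWeight G w q := by
  simp [walkWeight]

lemma walkWeight_reverse (hws : ∀ a b, w a b = w b a) (p : G.Walk a b) :
    walkWeight G w p.reverse = walkWeight G w p := by
  induction p with
  | nil => simp
  | cons h p ih => simp [ih, hws _ _, add_comm]

@[simp]
lemma walkWeight_mapLe (h : G ≤ H) (p : G.Walk a b) :
    walkWeight H w (p.mapLe h) = walkWeight G w p := by
  induction p with
  | nil => simp
  | cons h p ih => simp [ih]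

@[simp]
lemma walkWeight_transfer (p : G.Walk a b) (hp : ∀ e ∈ p.edges, e ∈ H.edgeSet) :
    walkWeight H w (p.transfer H hp) = walkWeight G w p := by
  induction p with
  | nil => simp
  | cons h p ih => exact (walkWeight_cons _ _).trans (by rw [ih, walkWeight_cons])

lemma walkWeight_nonneg (hw : ∀ a b, G.Adj a b → 0 ≤ w a b) (p : G.Walk a b) :
    0 ≤ walkWeight G w p :=
  List.sum_nonneg <| by simpa using fun d _ => hw _ _ d.adj

lemma walkWeight_bypass_le (hw : ∀ a b, G.Adj a b → 0 ≤ w a b) (p : G.Walk a b) :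
    walkWeight G w p.bypass ≤ walkWeight G w p := by
  have hnd : p.bypass.darts.Nodup := darts_nodup_of_support_nodup p.bypass_isPath.support_nodup
  obtain ⟨l, hperm, hsub⟩ := hnd.subperm p.darts_bypass_subset_darts
  calc walkWeight G w p.bypass = (l.map fun d => w d.fst d.snd).sum := ((hperm.map _).sum_eq).symm
    _ ≤ walkWeight G w p :=
      (hsub.map _).sum_le_sum <| by simpa using fun d _ => hw _ _ d.adj

lemma wdist_le_walkWeight (hw : ∀ a b, G.Adj a b → 0 ≤ w a b) (p : G.Walk a b) :
    wdist G w a b ≤ walkWeight G w p :=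
  csInf_le ⟨0, by rintro _ ⟨q, rfl⟩; exact walkWeight_nonneg hw q⟩ ⟨p, rfl⟩

lemma wdist_nonneg (hw : ∀ a b, G.Adj a b → 0 ≤ w a b) (a b : V) : 0 ≤ wdist G w a b :=
  Real.sInf_nonneg <| by rintro _ ⟨q, rfl⟩; exact walkWeight_nonneg hw q

lemma wdist_le_add_wdist_of_forall_walk (hw : ∀ a b, H.Adj a b → 0 ≤ w a b)
    (hab : G.Reachable a b) {a' b' : V} (k : ℝ)
    (h : ∀ q : G.Walk a b, ∃ r : H.Walk a' b', walkWeight H w r ≤ k + walkWeight G w q) :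
    wdist H w a' b' ≤ k + wdist G w a b := by
  have : wdist H w a' b' - k ≤ wdist G w a b := by
    refine le_csInf ⟨_, hab.some, rfl⟩ ?_
    rintro _ ⟨q, rfl⟩
    obtain ⟨r, hr⟩ := h q
    linarith [wdist_le_walkWeight hw r]
  linarith

lemma wdist_le_wdist_add_walkWeight (hw : ∀ a b, G.Adj a b → 0 ≤ w a b)
    (hab : G.Reachable a b) (q : G.Walk b c) :
    wdist G w a c ≤ wdist G w a b + walkWeight G w q := by
  rw [add_comm]
  exact wdist_le_add_wdist_of_forall_walk hw hab _ fun p => ⟨p.append q, by simp [add_comm]⟩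

lemma wdist_add_add_wdist_le_of_mem_darts (hHG : H ≤ G) (hw : ∀ a b, G.Adj a b → 0 ≤ w a b)
    {p : H.Walk a b} {d : H.Dart} (hd : d ∈ p.darts) :
    wdist G w a d.fst + w d.fst d.snd + wdist G w d.snd b ≤ walkWeight H w p := by
  obtain ⟨p₁, p₂, rfl⟩ := exists_eq_append_cons_of_mem_darts hd
  have h₁ := wdist_le_walkWeight hw (p₁.mapLe hHG)
  have h₂ := wdist_le_walkWeight hw (p₂.mapLe hHG)
  simp only [walkWeight_mapLe] at h₁ h₂
  simp only [walkWeight_append, walkWeight_cons]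
  linarith

lemma IsAcyclic.walkWeight_eq_wdist_s5 (hG : G.IsAcyclic) (hw : ∀ a b, G.Adj a b → 0 ≤ w a b)
    {p : G.Walk a b} (hp : p.IsPath) : walkWeight G w p = wdist G w a b := by
  refine le_antisymm (le_csInf ⟨_, p, rfl⟩ ?_) (wdist_le_walkWeight hw p)
  rintro _ ⟨q, rfl⟩
  have : p = q.bypass :=
    congrArg Subtype.val ((hG.subsingleton_path a b).elim ⟨p, hp⟩ ⟨_, q.bypass_isPath⟩)
  exact this ▸ walkWeight_bypass_le hw q

end WalkWeight

section TreeCut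

variable {G T : SimpleGraph V} {w : V → V → ℝ} {s t u v : V}

lemma IsTree.reachable_deleteEdges_or (hT : T.IsTree)
    (hsu : (T.deleteEdges {s(u, v)}).Reachable s u) (z : V) :
    (T.deleteEdges {s(u, v)}).Reachable s z ∨ (T.deleteEdges {s(u, v)}).Reachable v z := by
  rcases (hT.connected u z).some.reachable_deleteEdges_or_exists_mem s(u, v)
    with huz | ⟨x, hx, hxz⟩
  · exact Or.inl (hsu.trans huz)
  · rcases Sym2.mem_iff.1 hx with rfl | rfl
    · exact Or.inl (hsu.trans hxz)
    · exact Or.inr hxz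

lemma IsAcyclic.not_reachable_deleteEdges (hT : T.IsAcyclic) (huv : T.Adj u v)
    (hsu : (T.deleteEdges {s(u, v)}).Reachable s u) {z : V}
    (hsz : (T.deleteEdges {s(u, v)}).Reachable s z) :
    ¬ (T.deleteEdges {s(u, v)}).Reachable v z := fun hvz =>
  isBridge_iff.1 (isAcyclic_iff_forall_adj_isBridge.1 hT huv)
    (hsu.symm.trans (hsz.trans hvz.symm))

lemma IsAcyclic.exists_walk_deleteEdges_wdist_eq (hT : T.IsAcyclic)
    (hw : ∀ a b, T.Adj a b → 0 ≤ w a b) (huv : T.Adj u v)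
    (hsu : (T.deleteEdges {s(u, v)}).Reachable s u) {z : V}
    (hvz : (T.deleteEdges {s(u, v)}).Reachable v z) :
    ∃ r : (T.deleteEdges {s(u, v)}).Walk v z,
      wdist T w s u + w u v + walkWeight _ w r = wdist T w s z := by
  obtain ⟨p, hp⟩ := hsu.exists_isPath
  obtain ⟨r, hr⟩ := hvz.exists_isPath
  have hle := T.deleteEdges_le {s(u, v)}
  have hpath : ((p.mapLe hle).append (cons huv (r.mapLe hle))).IsPath := by
    rw [isPath_def, support_append, support_cons, List.tail_cons, support_mapLe_eq_support,
      support_mapLe_eq_support]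
    refine hp.support_nodup.append hr.support_nodup fun x hxp hxr => ?_
    exact hT.not_reachable_deleteEdges huv hsu ⟨p.takeUntil x hxp⟩ ⟨r.takeUntil x hxr⟩
  refine ⟨r, ?_⟩
  rw [← hT.walkWeight_eq_wdist_s5 hw (hp.mapLe hle), ← hT.walkWeight_eq_wdist_s5 hw hpath]
  simp [add_assoc]

lemma exists_walk_deleteEdges_walkWeight_le (hT : T.IsTree) (hTG : T ≤ G)
    (hw : ∀ a b, G.Adj a b → 0 ≤ w a b) (hws : ∀ a b, w a b = w b a)
    (hSPT : ∀ z, wdist T w s z = wdist G w s z) (huv : T.Adj u v)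
    (hsu : (T.deleteEdges {s(u, v)}).Reachable s u)
    (hvt : (T.deleteEdges {s(u, v)}).Reachable v t)
    {y : V} (hvy : (T.deleteEdges {s(u, v)}).Reachable v y) (q : G.Walk y t) :
    ∃ r : (G.deleteEdges {s(u, v)}).Walk y t, walkWeight _ w r ≤ walkWeight G w q := by
  by_cases he : s(u, v) ∈ q.edges
  · have hwT : ∀ a b, T.Adj a b → 0 ≤ w a b := fun a b h => hw a b (hTG h)
    obtain ⟨ry, hry⟩ := hT.isAcyclic.exists_walk_deleteEdges_wdist_eq hwT huv hsu hvy
    obtain ⟨rt, hrt⟩ := hT.isAcyclic.exists_walk_deleteEdges_wdist_eq hwT huv hsu hvt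
    refine ⟨(ry.reverse.append rt).mapLe (deleteEdges_mono hTG), ?_⟩
    have hu : u ∈ q.support := q.fst_mem_support_of_mem_edges he
    have hGsu : G.Reachable s u := (hsu.mono (T.deleteEdges_le _)).mono hTG
    have hy := wdist_le_wdist_add_walkWeight hw hGsu (q.takeUntil u hu).reverse
    have ht := wdist_le_wdist_add_walkWeight hw hGsu (q.dropUntil u hu)
    have hq := congrArg (walkWeight G w) (q.take_spec hu)
    simp only [walkWeight_reverse hws, walkWeight_append] at hy hq
    simp only [hSPT] at hry hrt
    simp only [walkWeight_mapLe, walkWeight_append, walkWeight_reverse hws]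
    linarith [hw u v (hTG huv)]
  · exact ⟨q.toDeleteEdges {s(u, v)} (fun _ h h' => he (h' ▸ h)),
      (walkWeight_transfer _ _).le⟩

lemma wdist_deleteEdges_le_of_adj (hT : T.IsTree) (hTG : T ≤ G)
    (hw : ∀ a b, G.Adj a b → 0 ≤ w a b) (hws : ∀ a b, w a b = w b a)
    (hSPT : ∀ z, wdist T w s z = wdist G w s z) (huv : T.Adj u v)
    (hsu : (T.deleteEdges {s(u, v)}).Reachable s u)
    (hvt : (T.deleteEdges {s(u, v)}).Reachable v t)
    {x y : V} (hxy : G.Adj x y) (hne : s(x, y) ≠ s(u, v))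
    (hsx : (T.deleteEdges {s(u, v)}).Reachable s x)
    (hvy : (T.deleteEdges {s(u, v)}).Reachable v y) :
    wdist (G.deleteEdges {s(u, v)}) w s t ≤ wdist G w s x + w x y + wdist G w y t := by
  have hle := deleteEdges_mono (s := {s(u, v)}) hTG
  have hyt : G.Reachable y t := ((hvy.symm.trans hvt).mono (T.deleteEdges_le _)).mono hTG
  have hxy' : (G.deleteEdges {s(u, v)}).Adj x y := by simpa [hxy] using hne
  obtain ⟨px, hpx⟩ := hsx.exists_isPath
  have hpx_weight := hT.isAcyclic.walkWeight_eq_wdist_s5 (fun a b h => hw a b (hTG h))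
    (hpx.mapLe (T.deleteEdges_le _))
  refine wdist_le_add_wdist_of_forall_walk (fun a b h => hw a b (G.deleteEdges_le _ h)) hyt _
    fun q => ?_
  obtain ⟨r, hr⟩ := exists_walk_deleteEdges_walkWeight_le hT hTG hw hws hSPT huv hsu hvt hvy q
  refine ⟨(px.mapLe hle).append (cons hxy' r), ?_⟩
  simp only [walkWeight_mapLe, hSPT] at hpx_weight
  simp only [walkWeight_append, walkWeight_mapLe, walkWeight_cons, hpx_weight]
  linarith

lemma exists_adj_add_add_wdist_le_walkWeight (hT : T.IsTree)
    (hw : ∀ a b, G.Adj a b → 0 ≤ w a b) (huv : T.Adj u v)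
    (hsu : (T.deleteEdges {s(u, v)}).Reachable s u)
    (hvt : (T.deleteEdges {s(u, v)}).Reachable v t)
    (W : (G.deleteEdges {s(u, v)}).Walk s t) :
    ∃ x y, G.Adj x y ∧ s(x, y) ≠ s(u, v) ∧ (T.deleteEdges {s(u, v)}).Reachable s x ∧
      (T.deleteEdges {s(u, v)}).Reachable v y ∧
      wdist G w s x + w x y + wdist G w y t ≤ walkWeight _ w W := by
  obtain ⟨d, hd, hsx, hsy⟩ :=
    W.exists_boundary_dart {z | (T.deleteEdges {s(u, v)}).Reachable s z} .rfl
      fun hst => hT.isAcyclic.not_reachable_deleteEdges huv hsu hst hvt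
  obtain ⟨hxy, hne⟩ := deleteEdges_adj.1 d.adj
  exact ⟨d.fst, d.snd, hxy, by simpa using hne, hsx,
    (hT.reachable_deleteEdges_or hsu _).resolve_left hsy,
    wdist_add_add_wdist_le_of_mem_darts (G.deleteEdges_le _) hw hd⟩

theorem wdist_deleteEdges_eq_sInf (hT : T.IsTree) (hTG : T ≤ G)
    (hw : ∀ a b, G.Adj a b → 0 ≤ w a b) (hws : ∀ a b, w a b = w b a)
    (hSPT : ∀ z, wdist T w s z = wdist G w s z) (huv : T.Adj u v)
    (hsu : (T.deleteEdges {s(u, v)}).Reachable s u)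
    (hvt : (T.deleteEdges {s(u, v)}).Reachable v t)
    (hne : ∃ x y, G.Adj x y ∧ s(x, y) ≠ s(u, v) ∧
      (T.deleteEdges {s(u, v)}).Reachable s x ∧ (T.deleteEdges {s(u, v)}).Reachable v y) :
    wdist (G.deleteEdges {s(u, v)}) w s t =
      sInf {r | ∃ x y, G.Adj x y ∧ s(x, y) ≠ s(u, v) ∧
        (T.deleteEdges {s(u, v)}).Reachable s x ∧ (T.deleteEdges {s(u, v)}).Reachable v y ∧
        r = wdist G w s x + w x y + wdist G w y t} := by
  set S := {r | ∃ x y, G.Adj x y ∧ s(x, y) ≠ s(u, v) ∧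
    (T.deleteEdges {s(u, v)}).Reachable s x ∧ (T.deleteEdges {s(u, v)}).Reachable v y ∧
    r = wdist G w s x + w x y + wdist G w y t}
  have hS : BddBelow S := by
    refine ⟨0, ?_⟩
    rintro _ ⟨x, y, hxy, -, -, -, rfl⟩
    have := wdist_nonneg hw s x
    have := wdist_nonneg hw y t
    linarith [hw x y hxy]
  obtain ⟨x, y, hxy, hne, hsx, hvy⟩ := hne
  have hst : (G.deleteEdges {s(u, v)}).Reachable s t := by
    have hle := deleteEdges_mono (s := {s(u, v)}) hTG
    exact (hsx.mono hle).trans ((Adj.reachable (by simpa [hxy] using hne)).trans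
      ((hvy.symm.trans hvt).mono hle))
  refine le_antisymm (le_csInf ⟨_, x, y, hxy, hne, hsx, hvy, rfl⟩ ?_)
    (le_csInf ⟨_, hst.some, rfl⟩ ?_)
  · rintro _ ⟨x, y, hxy, hne, hsx, hvy, rfl⟩
    exact wdist_deleteEdges_le_of_adj hT hTG hw hws hSPT huv hsu hvt hxy hne hsx hvy
  · rintro _ ⟨W, rfl⟩
    obtain ⟨x, y, hxy, hne, hsx, hvy, hW⟩ :=
      exists_adj_add_add_wdist_le_walkWeight hT hw huv hsu hvt W
    exact (csInf_le hS ⟨x, y, hxy, hne, hsx, hvy, rfl⟩).trans hW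

end TreeCut

end SimpleGraph

theorem stmt5_general {V : Type*}
    (G : SimpleGraph V) (w : V → V → ℝ)
    (hw : ∀ a b, G.Adj a b → 0 < w a b) (hws : ∀ a b, w a b = w b a)
    (s t : V) (p : G.Walk s t) (hp : p.IsPath)
    (T : SimpleGraph V) (hTG : T ≤ G) (hT : T.IsTree)
    (hSPT : ∀ v, wdist T w s v = wdist G w s v)
    (hPT : ∀ e ∈ p.edges, e ∈ T.edgeSet)
    (i : ℕ) (hi1 : 1 ≤ i) (hil : i ≤ p.length)
    (hne : ∃ x y, G.Adj x y ∧ s(x, y) ≠ s(p.getVert (i-1), p.getVert i) ∧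
      (T.deleteEdges {s(p.getVert (i-1), p.getVert i)}).Reachable s x ∧
      (T.deleteEdges {s(p.getVert (i-1), p.getVert i)}).Reachable (p.getVert i) y) :
    wdist (G.deleteEdges {s(p.getVert (i-1), p.getVert i)}) w s t =
      sInf {r | ∃ x y, G.Adj x y ∧ s(x, y) ≠ s(p.getVert (i-1), p.getVert i) ∧
        (T.deleteEdges {s(p.getVert (i-1), p.getVert i)}).Reachable s x ∧
        (T.deleteEdges {s(p.getVert (i-1), p.getVert i)}).Reachable (p.getVert i) y ∧
        r = wdist G w s x + w x y + wdist G w y t} := by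
  have hi : i - 1 < p.darts.length := by rw [p.length_darts]; omega
  obtain ⟨huv, hsu, hvt⟩ :=
    hp.isTrail.reachable_deleteEdges_of_mem_darts hPT (p.darts.getElem_mem hi)
  simp only [p.darts_getElem_eq_getVert, Nat.sub_add_cancel hi1] at huv hsu hvt
  exact wdist_deleteEdges_eq_sInf hT hTG (fun a b h => (hw a b h).le) hws hSPT huv hsu hvt hne

theorem stmt5 {V : Type*}
    (G : SimpleGraph V) (hconn : G.Connected) (w : V → V → ℝ)
    (hw : ∀ a b, G.Adj a b → 0 < w a b) (hws : ∀ a b, w a b = w b a)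
    (s t : V) (p : G.Walk s t) (hp : p.IsPath)
    (hps : walkWeight G w p = wdist G w s t)
    (T : SimpleGraph V) (hTG : T ≤ G) (hT : T.IsTree)
    (hSPT : ∀ v, wdist T w s v = wdist G w s v)
    (hPT : ∀ e ∈ p.edges, e ∈ T.edgeSet)
    (i : ℕ) (hi1 : 1 ≤ i) (hil : i ≤ p.length)
    (hne : ∃ x y, G.Adj x y ∧ s(x, y) ≠ s(p.getVert (i-1), p.getVert i) ∧
      (T.deleteEdges {s(p.getVert (i-1), p.getVert i)}).Reachable s x ∧
      (T.deleteEdges {s(p.getVert (i-1), p.getVert i)}).Reachable (p.getVert i) y) :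
    wdist (G.deleteEdges {s(p.getVert (i-1), p.getVert i)}) w s t =
      sInf {r | ∃ x y, G.Adj x y ∧ s(x, y) ≠ s(p.getVert (i-1), p.getVert i) ∧
        (T.deleteEdges {s(p.getVert (i-1), p.getVert i)}).Reachable s x ∧
        (T.deleteEdges {s(p.getVert (i-1), p.getVert i)}).Reachable (p.getVert i) y ∧
        r = wdist G w s x + w x y + wdist G w y t} :=
  stmt5_general G w hw hws s t p hp T hTG hT hSPT hPT i hi1 hil hne
end
end

section
/- Define the label of each vertex u of G to be the largest index i ∈ {0, ..., l} such that u lies in the subtree T_{v_i} of T_s rooted at v_i. Then a non-tree edge (x, y) with label(x) ≤ label(y) is a crossing edge for e_i (i.e., x ∈ T_1(e_i) and y ∈ T_2(e_i)) if and only if label(x) < i and label(y) ≥ i. -/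
open Classical SimpleGraph

noncomputable section

variable {V : Type*}

/-! Removing the path edge `e_j` splits the tree `T` into the side of `s = v 0` and the subtree
`T_{v_j}`, and every vertex lies on exactly one side. The subtrees shrink along the path: a walk
from `s` into `T_{v_k}` avoiding `e_i` (`i ≤ k`) must cross `e_k`, so it reaches `v k`, which lies
in `T_{v_i}`, contradicting the split at `e_i`. Hence `u ∈ T_{v_i}` iff `i ≤ label u`, and the
`s`-side of `e_i` consists of the vertices with `label u < i`. -/

namespace SimpleGraph

lemma reachable_deleteEdges_or_of_adj {G : SimpleGraph V} {a b c d : V}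
    (hc : (G.deleteEdges {s(a, b)}).Reachable a c ∨ (G.deleteEdges {s(a, b)}).Reachable b c)
    (hcd : G.Adj c d) :
    (G.deleteEdges {s(a, b)}).Reachable a d ∨ (G.deleteEdges {s(a, b)}).Reachable b d := by
  by_cases he : s(c, d) = s(a, b)
  · rcases Sym2.eq_iff.mp he with ⟨-, rfl⟩ | ⟨-, rfl⟩
    · exact .inr .rfl
    · exact .inl .rfl
  · have hcd' : (G.deleteEdges {s(a, b)}).Adj c d := deleteEdges_adj.mpr ⟨hcd, he⟩
    exact hc.imp (·.trans hcd'.reachable) (·.trans hcd'.reachable)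

lemma Preconnected.reachable_deleteEdges_or {G : SimpleGraph V} (hG : G.Preconnected)
    (a b z : V) :
    (G.deleteEdges {s(a, b)}).Reachable a z ∨ (G.deleteEdges {s(a, b)}).Reachable b z := by
  suffices ∀ {c z : V} (W : G.Walk c z),
      ((G.deleteEdges {s(a, b)}).Reachable a c ∨ (G.deleteEdges {s(a, b)}).Reachable b c) →
      (G.deleteEdges {s(a, b)}).Reachable a z ∨ (G.deleteEdges {s(a, b)}).Reachable b z from
    this (hG a z).some (.inl .rfl)
  intro c z W
  induction W with
  | nil => exact id
  | cons hcd _ ih => exact fun hc => ih (reachable_deleteEdges_or_of_adj hc hcd)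

end SimpleGraph

lemma le_label {T : SimpleGraph V} {v : ℕ → V} {l k : ℕ} {u : V} (hkl : k ≤ l)
    (hk : inSub T v k u) : k ≤ label T v l u :=
  le_csSup (s := {k | k ≤ l ∧ inSub T v k u}) ⟨l, fun _ h => h.1⟩ ⟨hkl, hk⟩

lemma label_le_and_inSub (T : SimpleGraph V) (v : ℕ → V) (l : ℕ) (u : V) :
    label T v l u ≤ l ∧ inSub T v (label T v l u) u :=
  Nat.sSup_mem (s := {k | k ≤ l ∧ inSub T v k u}) ⟨0, Nat.zero_le l, .inl rfl⟩
    ⟨l, fun _ h => h.1⟩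

/-- The forest `T ∖ {e_j}`, where `e_j = s(v (j - 1), v j)` is the `j`-th edge of the path `v`. -/
def deletePathEdge (T : SimpleGraph V) (v : ℕ → V) (j : ℕ) : SimpleGraph V :=
  T.deleteEdges {s(v (j - 1), v j)}

section TreePath

variable {T : SimpleGraph V} {v : ℕ → V} {l : ℕ}

lemma pathEdge_ne (hinj : Set.InjOn v {j | j ≤ l}) {b j : ℕ} (hb : b < l) (hj : j ≤ l)
    (hbj : b + 1 ≠ j) : s(v b, v (b + 1)) ≠ s(v (j - 1), v j) := by
  intro h
  rcases Sym2.eq_iff.mp h with ⟨-, h⟩ | ⟨h₁, h₂⟩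
  · exact hbj (hinj (by simp; omega) hj h)
  · have := hinj (by simp; omega) hj h₁
    have := hinj (by simp; omega) (by simp; omega) h₂
    omega

lemma deletePathEdge_reachable_of_le (hinj : Set.InjOn v {j | j ≤ l})
    (hadj : ∀ j < l, T.Adj (v j) (v (j + 1))) {j a b : ℕ} (hj : j ≤ l) (hab : a ≤ b)
    (hbl : b ≤ l) (hside : j ≤ a ∨ b < j) : (deletePathEdge T v j).Reachable (v a) (v b) := by
  induction b, hab using Nat.le_induction with
  | base => rfl
  | succ b hab ih =>
    refine (ih (by omega) (by omega)).trans (Adj.reachable ?_)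
    exact deleteEdges_adj.mpr ⟨hadj b (by omega), pathEdge_ne hinj (by omega) hj (by omega)⟩

lemma not_reachable_deletePathEdge (hT : T.IsAcyclic) (hadj : ∀ j < l, T.Adj (v j) (v (j + 1)))
    {j : ℕ} (hj1 : 1 ≤ j) (hjl : j ≤ l) :
    ¬ (deletePathEdge T v j).Reachable (v (j - 1)) (v j) := by
  have h := hadj (j - 1) (by omega)
  rw [Nat.sub_add_cancel hj1] at h
  exact isAcyclic_iff_forall_adj_isBridge.mp hT h

lemma reachable_deletePathEdge_iff_not (hT : T.IsTree) (hinj : Set.InjOn v {j | j ≤ l})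
    (hadj : ∀ j < l, T.Adj (v j) (v (j + 1))) {j : ℕ} (hj1 : 1 ≤ j) (hjl : j ≤ l) (u : V) :
    (deletePathEdge T v j).Reachable (v 0) u ↔ ¬ (deletePathEdge T v j).Reachable (v j) u := by
  have h0 : (deletePathEdge T v j).Reachable (v 0) (v (j - 1)) :=
    deletePathEdge_reachable_of_le hinj hadj hjl (Nat.zero_le _) (by omega) (by omega)
  refine ⟨fun h0u hju => ?_, fun hju => ?_⟩
  · exact not_reachable_deletePathEdge hT.isAcyclic hadj hj1 hjl
      (h0.symm.trans (h0u.trans hju.symm))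
  · exact h0.trans ((hT.connected.preconnected.reachable_deleteEdges_or _ _ u).resolve_right hju)

lemma deletePathEdge_reachable_antitone (hT : T.IsTree) (hinj : Set.InjOn v {j | j ≤ l})
    (hadj : ∀ j < l, T.Adj (v j) (v (j + 1))) {i k : ℕ} (hi1 : 1 ≤ i) (hik : i ≤ k)
    (hkl : k ≤ l) {u : V} (hku : (deletePathEdge T v k).Reachable (v k) u) :
    (deletePathEdge T v i).Reachable (v i) u := by
  by_contra hiu
  obtain ⟨W⟩ := (reachable_deletePathEdge_iff_not hT hinj hadj hi1 (hik.trans hkl) u).2 hiu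
  have hcross : s(v (k - 1), v k) ∈ W.edges :=
    W.mem_edges_of_not_reachable_deleteEdges fun h0u =>
      (reachable_deletePathEdge_iff_not hT hinj hadj (hi1.trans hik) hkl u).1
        (h0u.mono (deleteEdges_mono (deleteEdges_le _))) hku
  have h0k : (deletePathEdge T v i).Reachable (v 0) (v k) :=
    ⟨W.takeUntil _ (W.snd_mem_support_of_mem_edges hcross)⟩
  have hik' : (deletePathEdge T v i).Reachable (v i) (v k) :=
    deletePathEdge_reachable_of_le hinj hadj (hik.trans hkl) hik hkl (.inl le_rfl)
  exact (reachable_deletePathEdge_iff_not hT hinj hadj hi1 (hik.trans hkl) _).1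
    (h0k.trans hik'.symm) .rfl

lemma le_label_iff (hT : T.IsTree) (hinj : Set.InjOn v {j | j ≤ l})
    (hadj : ∀ j < l, T.Adj (v j) (v (j + 1))) {i : ℕ} (hi1 : 1 ≤ i) (hil : i ≤ l) (u : V) :
    i ≤ label T v l u ↔ (deletePathEdge T v i).Reachable (v i) u := by
  refine ⟨fun hi => ?_, fun h => le_label hil (.inr h)⟩
  obtain ⟨hle, hzero | hreach⟩ := label_le_and_inSub T v l u
  · omega
  · exact deletePathEdge_reachable_antitone hT hinj hadj hi1 hi hle hreach

lemma reachable_deletePathEdge_iff_label_lt (hT : T.IsTree) (hinj : Set.InjOn v {j | j ≤ l})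
    (hadj : ∀ j < l, T.Adj (v j) (v (j + 1))) {i : ℕ} (hi1 : 1 ≤ i) (hil : i ≤ l) (u : V) :
    (deletePathEdge T v i).Reachable (v 0) u ↔ label T v l u < i := by
  rw [reachable_deletePathEdge_iff_not hT hinj hadj hi1 hil, ← le_label_iff hT hinj hadj hi1 hil,
    not_le]

end TreePath

theorem stmt7_general {V : Type*}
    (G : SimpleGraph V)
    (s t : V) (p : G.Walk s t) (hp : p.IsPath)
    (T : SimpleGraph V) (hT : T.IsTree)
    (hPT : ∀ e ∈ p.edges, e ∈ T.edgeSet)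
    (i : ℕ) (hi1 : 1 ≤ i) (hil : i ≤ p.length)
    (x y : V) :
    ((T.deleteEdges {s(p.getVert (i-1), p.getVert i)}).Reachable s x ∧
     (T.deleteEdges {s(p.getVert (i-1), p.getVert i)}).Reachable (p.getVert i) y) ↔
    (label T p.getVert p.length x < i ∧ i ≤ label T p.getVert p.length y) := by
  have hadj : ∀ j < p.length, T.Adj (p.getVert j) (p.getVert (j + 1)) := fun j hj =>
    T.mem_edgeSet.1 (hPT _ (p.mk_mem_edges_iff_exists.2 ⟨j, hj, rfl⟩))
  have hx := reachable_deletePathEdge_iff_label_lt hT hp.getVert_injOn hadj hi1 hil x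
  rw [p.getVert_zero] at hx
  exact and_congr hx (le_label_iff hT hp.getVert_injOn hadj hi1 hil y).symm

theorem stmt7 {V : Type*}
    (G : SimpleGraph V) (hconn : G.Connected) (w : V → V → ℝ)
    (hw : ∀ a b, G.Adj a b → 0 < w a b) (hws : ∀ a b, w a b = w b a)
    (s t : V) (p : G.Walk s t) (hp : p.IsPath)
    (hps : walkWeight G w p = wdist G w s t)
    (T : SimpleGraph V) (hTG : T ≤ G) (hT : T.IsTree)
    (hSPT : ∀ v, wdist T w s v = wdist G w s v)
    (hPT : ∀ e ∈ p.edges, e ∈ T.edgeSet)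
    (i : ℕ) (hi1 : 1 ≤ i) (hil : i ≤ p.length)
    (x y : V) (hxy : G.Adj x y) (hnt : s(x, y) ∉ T.edgeSet)
    (hord : label T p.getVert p.length x ≤ label T p.getVert p.length y) :
    ((T.deleteEdges {s(p.getVert (i-1), p.getVert i)}).Reachable s x ∧
     (T.deleteEdges {s(p.getVert (i-1), p.getVert i)}).Reachable (p.getVert i) y) ↔
    (label T p.getVert p.length x < i ∧ i ≤ label T p.getVert p.length y) :=
  stmt7_general G s t p hp T hT hPT i hi1 hil x y
end
end

section
/- For an internal vertex v_i of P_G(s,t), every s-t path in G \ {v_i} contains at least one edge of C(v_i) = C'(v_i) ∪ C''(v_i), where C'(v_i) are edges from T_1(v_i) to T_2(v_i) and C''(v_i) are edges (other than (v_i, v_{i+1})) from F(v_i) to T_2(v_i). -/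
open Classical SimpleGraph

noncomputable section

variable {V : Type*}

/-!
Deleting `v = p.getVert i` from the tree `T` separates `s` from `v' = p.getVert (i+1)`: the prefix
of `p` up to `v'` is the unique `s`–`v'` path in `T`, and it passes through `v`. On the other hand
the suffix of `p` from `v'` to `t` avoids `v`, so `t` lies in the component `T₂` of `v'`. The walk
`q` therefore has a dart entering `T₂`; its tail is neither `v` nor in `T₂`, so it lies in `T₁`
or in `F`, and the dart is not `(v, v')` because it avoids `v`.
-/

lemma delVerts_le (G : SimpleGraph V) (S : Set V) : delVerts G S ≤ G := fun _ _ h => h.1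

namespace SimpleGraph.Walk

variable {G T : SimpleGraph V} {S : Set V} {a b : V}

lemma reachable_delVerts (r : G.Walk a b) (hE : ∀ e ∈ r.edges, e ∈ T.edgeSet)
    (hS : ∀ x ∈ r.support, x ∉ S) : (delVerts T S).Reachable a b := by
  refine ⟨r.transfer _ fun e he => ?_⟩
  induction e using Sym2.ind with
  | _ x y => exact ⟨hE _ he, hS _ (r.fst_mem_support_of_mem_edges he),
      hS _ (r.snd_mem_support_of_mem_edges he)⟩

lemma notMem_of_mem_support_delVerts (r : (delVerts G S).Walk a b) (ha : a ∉ S) :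
    ∀ x ∈ r.support, x ∉ S := by
  induction r with
  | nil => simpa using ha
  | cons h r ih => simpa [ha] using ih h.2.2

lemma IsPath.not_reachable_delVerts (hT : T.IsAcyclic) {P : T.Walk a b} (hP : P.IsPath)
    {c : V} (hc : c ∈ P.support) (hca : c ≠ a) : ¬ (delVerts T {c}).Reachable a b := by
  rintro ⟨r⟩
  have hP_eq : P = (r.mapLe (delVerts_le T {c})).toPath :=
    congrArg Subtype.val ((hT.subsingleton_path a b).elim ⟨P, hP⟩ _)
  rw [hP_eq] at hc
  have hcr : c ∈ r.support := by
    simpa [support_mapLe_eq_support] using support_toPath_subset_support _ hc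
  exact r.notMem_of_mem_support_delVerts (by simpa using hca.symm) c hcr rfl

variable {p : G.Walk a b} {i j : ℕ}

lemma IsPath.reachable_delVerts_getVert_end (hp : p.IsPath) (hpT : ∀ e ∈ p.edges, e ∈ T.edgeSet)
    (hij : i < j) (hj : j ≤ p.length) : (delVerts T {p.getVert i}).Reachable (p.getVert j) b := by
  refine (p.drop j).reachable_delVerts (fun e he => hpT e ?_) fun x hx hxi => ?_
  · rw [edges_drop] at he
    exact List.mem_of_mem_drop he
  · obtain ⟨m, rfl, hm⟩ := mem_support_iff_exists_getVert.mp hx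
    rw [drop_getVert] at hxi
    rw [drop_length] at hm
    have := hp.getVert_injOn (by simp; omega) (by simp; omega) hxi
    omega

lemma IsPath.not_reachable_delVerts_getVert (hT : T.IsAcyclic) (hp : p.IsPath)
    (hpT : ∀ e ∈ p.edges, e ∈ T.edgeSet) (hi : 0 < i) (hij : i < j) (hj : j ≤ p.length) :
    ¬ (delVerts T {p.getVert i}).Reachable a (p.getVert j) := by
  have hE : ∀ e ∈ (p.take j).edges, e ∈ T.edgeSet := fun e he =>
    hpT e (List.mem_of_mem_take (by rwa [edges_take] at he))
  refine ((hp.take j).transfer hE).not_reachable_delVerts hT ?_ fun hia => ?_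
  · rw [support_transfer, mem_support_iff_exists_getVert]
    exact ⟨i, by simp [take_getVert, hij.le], by simp [take_length]; omega⟩
  · have := hp.getVert_injOn (by simp; omega) (by simp) (hia.trans p.getVert_zero.symm)
    omega

end SimpleGraph.Walk

theorem stmt16_general {V : Type*}
    (G : SimpleGraph V)
    (s t : V) (p : G.Walk s t) (hp : p.IsPath)
    (T : SimpleGraph V) (hT : T.IsTree)
    (hPT : ∀ e ∈ p.edges, e ∈ T.edgeSet)
    (i : ℕ) (hi1 : 1 ≤ i) (hil : i + 1 ≤ p.length)
    (q : (delVerts G {p.getVert i}).Walk s t) :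
    ∃ e ∈ q.edges,
      (∃ x y, e = s(x, y) ∧ G.Adj x y ∧
        (delVerts T {p.getVert i}).Reachable s x ∧
        (delVerts T {p.getVert i}).Reachable (p.getVert (i+1)) y) ∨
      (e ≠ s(p.getVert i, p.getVert (i+1)) ∧ ∃ x y, e = s(x, y) ∧ G.Adj x y ∧
        (x ≠ p.getVert i ∧ ¬ (delVerts T {p.getVert i}).Reachable s x ∧
          ¬ (delVerts T {p.getVert i}).Reachable (p.getVert (i+1)) x) ∧
        (delVerts T {p.getVert i}).Reachable (p.getVert (i+1)) y) := by
  set T' := delVerts T {p.getVert i}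
  have hs : ¬ T'.Reachable (p.getVert (i+1)) s := fun h =>
    hp.not_reachable_delVerts_getVert hT.isAcyclic hPT hi1 (Nat.lt_succ_self i) hil h.symm
  have ht : T'.Reachable (p.getVert (i+1)) t :=
    hp.reachable_delVerts_getVert_end hPT (Nat.lt_succ_self i) hil
  obtain ⟨d, hd, hx, hy⟩ :=
    q.exists_boundary_dart {x | ¬ T'.Reachable (p.getVert (i+1)) x} hs (by simpa using ht)
  simp only [Set.mem_ofPred_eq, not_not] at hx hy
  have hxv : d.fst ≠ p.getVert i := d.adj.2.1
  have hxv' : d.fst ≠ p.getVert (i+1) := fun h => hx (h ▸ Reachable.refl _)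
  refine ⟨d.edge, List.mem_map_of_mem hd, ?_⟩
  by_cases hsx : T'.Reachable s d.fst
  · exact Or.inl ⟨d.fst, d.snd, rfl, d.adj.1, hsx, hy⟩
  · refine Or.inr ⟨fun h => ?_, d.fst, d.snd, rfl, d.adj.1, ⟨hxv, hsx, hx⟩, hy⟩
    rcases Sym2.eq_iff.mp h with ⟨h1, -⟩ | ⟨h1, -⟩
    exacts [hxv h1, hxv' h1]

theorem stmt16 {V : Type*}
    (G : SimpleGraph V) (hconn : G.Connected) (w : V → V → ℝ)
    (hw : ∀ a b, G.Adj a b → 0 < w a b) (hws : ∀ a b, w a b = w b a)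
    (s t : V) (p : G.Walk s t) (hp : p.IsPath)
    (hps : walkWeight G w p = wdist G w s t)
    (T : SimpleGraph V) (hTG : T ≤ G) (hT : T.IsTree)
    (hSPT : ∀ v, wdist T w s v = wdist G w s v)
    (hPT : ∀ e ∈ p.edges, e ∈ T.edgeSet)
    (i : ℕ) (hi1 : 1 ≤ i) (hil : i + 1 ≤ p.length)
    (q : (delVerts G {p.getVert i}).Walk s t) :
    ∃ e ∈ q.edges,
      (∃ x y, e = s(x, y) ∧ G.Adj x y ∧
        (delVerts T {p.getVert i}).Reachable s x ∧
        (delVerts T {p.getVert i}).Reachable (p.getVert (i+1)) y) ∨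
      (e ≠ s(p.getVert i, p.getVert (i+1)) ∧ ∃ x y, e = s(x, y) ∧ G.Adj x y ∧
        (x ≠ p.getVert i ∧ ¬ (delVerts T {p.getVert i}).Reachable s x ∧
          ¬ (delVerts T {p.getVert i}).Reachable (p.getVert (i+1)) x) ∧
        (delVerts T {p.getVert i}).Reachable (p.getVert (i+1)) y) :=
  stmt16_general G s t p hp T hT hPT i hi1 hil q
end
end
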